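/- For distinct multi-indices I ≠ J with e_I, e_J ∈ G = {ξ : c(ξ) = -ξ}, the Killing form B(e_I,e_J) = trace(ad e_I ∘ ad e_J) vanishes; moreover for each K with e_K ∈ G, (ad e_I)²(e_K) = λ e_K where λ = 0 or λ = 4e_I², so B(e_I,e_I) = 4 m_I e_I² with m_I the number of such K with nonzero eigenvalue. -/

import Mathlib

open CliffordAlgebra

section Defs

variable {F V : Type*} [Field F] [AddCommGroup V] [Module F V]

/-- The monomial `e_I` associated to a multi-index `I`, realized as a finite set of
indices multiplied in increasing order (with `e_∅ = 1`). -/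
noncomputable def eI (Qf : QuadraticForm F V) {n : ℕ} (b : Module.Basis (Fin n) F V)
    (s : Finset (Fin n)) : CliffordAlgebra Qf :=
  ((s.sort (· ≤ ·)).map fun i => ι Qf (b i)).prod

/-- The conjugation anti-automorphism `c = α ∘ τ` of the Clifford algebra. -/
noncomputable def cconj (Qf : QuadraticForm F V) :
    CliffordAlgebra Qf →ₗ[F] CliffordAlgebra Qf :=
  involute.toLinearMap ∘ₗ (reverse (Q := Qf))

/-- The canonical bilinear form `Q̄(x,y) = p(x · c(y))`, where `p` is the scalar-component
projection determined by a monomial basis `bas` (indexed by multi-indices, with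
`bas s = e_s`, in particular `bas ∅ = 1`). -/
noncomputable def Qbar {Qf : QuadraticForm F V} {n : ℕ}
    (bas : Module.Basis (Finset (Fin n)) F (CliffordAlgebra Qf))
    (x y : CliffordAlgebra Qf) : F :=
  bas.coord ∅ (x * cconj Qf y)

/-- The Lie algebra `G = {ξ : c(ξ) = -ξ}` of infinitesimal isometries, as a submodule. -/
noncomputable def Gsub (Qf : QuadraticForm F V) : Submodule F (CliffordAlgebra Qf) :=
  LinearMap.ker (cconj Qf + LinearMap.id)

end Defs

/-! Monomials `e_I` of an orthogonal basis commute or anticommute with each other, and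
`e_I e_J ∈ F e_{I ∆ J}`. The change-of-form isomorphism `equivExterior` fixes orthogonal
monomials, so transporting the standard basis of the exterior algebra shows that the `e_I` form
a basis of the Clifford algebra. The conjugation `c` is diagonal in this basis, hence the `e_I`
lying in `G` form a basis of `G`, and traces on `G` are sums of diagonal coefficients.
Now `ad e_I ∘ ad e_J` maps `e_K` into `F e_{I ∆ J ∆ K}`, which has no diagonal coefficient
when `I ≠ J`; and `(ad e_I)² e_K = e_I² e_K - 2 e_I e_K e_I + e_K e_I²` is `0` or `4 e_I² e_K`
according as `e_K` commutes or anticommutes with `e_I`, while `e_I² ∈ F`. -/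

open scoped symmDiff

section

variable {A : Type*} [Ring A]

def CommuteUpToSign (x y : A) : Prop := ∃ σ : ℤˣ, x * y = σ • (y * x)

namespace CommuteUpToSign

theorem refl (x : A) : CommuteUpToSign x x := ⟨1, by rw [one_smul]⟩

theorem one_left (y : A) : CommuteUpToSign 1 y := ⟨1, by rw [one_mul, mul_one, one_smul]⟩

theorem of_anticomm {x y : A} (h : x * y = -(y * x)) : CommuteUpToSign x y :=
  ⟨-1, by rw [h, Units.neg_smul, one_smul]⟩

theorem symm {x y : A} (h : CommuteUpToSign x y) : CommuteUpToSign y x := by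
  obtain ⟨σ, hσ⟩ := h
  exact ⟨σ, by rw [hσ, smul_smul, Int.units_mul_self, one_smul]⟩

theorem mul_left {x y z : A} (hx : CommuteUpToSign x z) (hy : CommuteUpToSign y z) :
    CommuteUpToSign (x * y) z := by
  obtain ⟨σ, hσ⟩ := hx
  obtain ⟨τ, hτ⟩ := hy
  exact ⟨τ * σ, by rw [mul_assoc, hτ, mul_smul_comm, ← mul_assoc, hσ, smul_mul_assoc,
    mul_assoc, smul_smul]⟩

theorem commutator_commutator {R : Type*} [CommRing R] [Algebra R A] {x y : A}
    (h : CommuteUpToSign x y) :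
    x * (x * y - y * x) - (x * y - y * x) * x = 0 ∨
      x * (x * y - y * x) - (x * y - y * x) * x = (4 : R) • (x * x * y) := by
  obtain ⟨σ, hσ⟩ := h.symm
  rcases Int.units_eq_one_or σ with rfl | rfl
  · left
    rw [one_smul] at hσ
    rw [hσ, sub_self, mul_zero, zero_mul, sub_zero]
  · right
    rw [Units.neg_smul, one_smul] at hσ
    rw [hσ, mul_sub, sub_mul, mul_neg, neg_mul, mul_assoc x y x, hσ, Algebra.smul_def,
      map_ofNat]
    noncomm_ring

end CommuteUpToSign

end

namespace Module.Basis

variable {ι F M : Type*} [Field F] [AddCommGroup M] [Module F M] (v : Basis ι F M)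

theorem eigenspace_le_span_image {f : Module.End F M} {γ : ι → F}
    (hf : ∀ i, f (v i) = γ i • v i) (μ : F) :
    f.eigenspace μ ≤ Submodule.span F (v '' {i | γ i = μ}) := by
  intro x hx
  rw [v.mem_span_image]
  intro i hi
  have hdiag : Finsupp.lapply i ∘ₗ v.repr.toLinearMap ∘ₗ f =
      γ i • (Finsupp.lapply i ∘ₗ v.repr.toLinearMap) := v.ext fun j => by
    obtain rfl | hji := eq_or_ne j i <;> simp [*]
  have := congrArg (· x) hdiag
  simp only [LinearMap.comp_apply, LinearMap.smul_apply, Module.End.mem_eigenspace_iff.mp hx,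
    map_smul, Finsupp.lapply_apply, smul_eq_mul] at this
  exact mul_right_cancel₀ (Finsupp.mem_support_iff.mp hi) this.symm

variable {W : Submodule F M}

open Classical in
theorem trace_eq_sum_repr [Fintype ι] (hW : W ≤ Submodule.span F (v '' {i | v i ∈ W}))
    (T : Module.End F W) :
    LinearMap.trace F W T = ∑ k : {i // v i ∈ W}, v.repr (T ⟨v k, k.2⟩) k := by
  have hWeq : Submodule.span F (Set.range (v ∘ Subtype.val : {i // v i ∈ W} → M)) = W := by
    refine le_antisymm (Submodule.span_le.mpr ?_) (hW.trans (Submodule.span_mono ?_))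
    · rintro _ ⟨k, rfl⟩
      exact k.2
    · rintro _ ⟨i, hi, rfl⟩
      exact ⟨⟨i, hi⟩, rfl⟩
  let bW : Basis {i // v i ∈ W} F W :=
    (Basis.span (v.linearIndependent.comp _ Subtype.val_injective)).map (LinearEquiv.ofEq _ _ hWeq)
  have hbW : ∀ k, bW k = ⟨v k, k.2⟩ := fun k => by
    ext
    simp [bW, Basis.span_apply]
  have hrepr : ∀ k, Finsupp.lapply k ∘ₗ bW.repr.toLinearMap =
      Finsupp.lapply k.1 ∘ₗ v.repr.toLinearMap ∘ₗ W.subtype := fun k => bW.ext fun j => by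
    rw [LinearMap.comp_apply, LinearEquiv.coe_coe, Basis.repr_self]
    simp [hbW, Finsupp.single_apply, Subtype.ext_iff]
  rw [LinearMap.trace_eq_matrix_trace F bW, Matrix.trace]
  refine Finset.sum_congr rfl fun k _ => ?_
  rw [Matrix.diag_apply, LinearMap.toMatrix_apply, hbW]
  exact congrArg (· (T ⟨v k, k.2⟩)) (hrepr k)

theorem trace_eq_zero_of_apply_eq_smul_ne [Fintype ι]
    (hW : W ≤ Submodule.span F (v '' {i | v i ∈ W})) (T : Module.End F W)
    (hT : ∀ i (ζ : W), (ζ : M) = v i → ∃ j ≠ i, ∃ c : F, (T ζ : M) = c • v j) :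
    LinearMap.trace F W T = 0 := by
  classical
  rw [v.trace_eq_sum_repr hW]
  refine Finset.sum_eq_zero fun k _ => ?_
  obtain ⟨j, hjk, c, hc⟩ := hT k ⟨v k, k.2⟩ rfl
  rw [hc, map_smul, v.repr_self, Finsupp.smul_apply, Finsupp.single_eq_of_ne hjk.symm, smul_zero]

theorem trace_eq_ncard_mul [Fintype ι] (hW : W ≤ Submodule.span F (v '' {i | v i ∈ W}))
    (T : Module.End F W) (a : F)
    (hT : ∀ i (ζ : W), (ζ : M) = v i → (T ζ : M) = 0 ∨ (T ζ : M) = a • v i) :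
    LinearMap.trace F W T = {i | ∃ ζ : W, (ζ : M) = v i ∧ (T ζ : M) ≠ 0}.ncard * a := by
  classical
  have hterm : ∀ k : {i // v i ∈ W}, v.repr (T ⟨v k, k.2⟩) k =
      if (T ⟨v k, k.2⟩ : M) = 0 then 0 else a := fun k => by
    split_ifs with h
    · rw [h, map_zero, Finsupp.zero_apply]
    · rw [(hT k _ rfl).resolve_left h, map_smul, v.repr_self, Finsupp.smul_apply,
        Finsupp.single_eq_same, smul_eq_mul, mul_one]
  have hset : {i | ∃ ζ : W, (ζ : M) = v i ∧ (T ζ : M) ≠ 0} =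
      ((Finset.univ.filter fun k : {i // v i ∈ W} => (T ⟨v k, k.2⟩ : M) ≠ 0).map
        (Function.Embedding.subtype _) : Set ι) := by
    ext i
    simp only [Set.mem_ofPred_eq, Finset.coe_map, Finset.coe_filter, Set.mem_image,
      Finset.mem_univ, true_and, Function.Embedding.coe_subtype]
    constructor
    · rintro ⟨⟨x, hx⟩, rfl : x = v i, hT⟩
      exact ⟨⟨i, hx⟩, hT, rfl⟩
    · rintro ⟨k, hk, rfl⟩
      exact ⟨_, rfl, hk⟩
  rw [v.trace_eq_sum_repr hW, Finset.sum_congr rfl fun k _ => hterm k, Finset.sum_ite,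
    Finset.sum_const_zero, zero_add, Finset.sum_const, nsmul_eq_mul, hset, Set.ncard_coe_finset,
    Finset.card_map]

end Module.Basis

theorem Finset.insert_eq_singleton_symmDiff {α : Type*} [DecidableEq α] {i : α}
    {s : Finset α} (h : i ∉ s) : insert i s = {i} ∆ s := by
  rw [Finset.symmDiff_eq_union (Finset.disjoint_singleton_left.mpr h), Finset.insert_eq]

theorem Finset.ofFn_orderEmbOfFin {α : Type*} [LinearOrder α] (s : Finset α) :
    List.ofFn (s.orderEmbOfFin rfl) = s.sort (· ≤ ·) :=
  List.ext_get (by simp) fun i _ _ => by simp [Finset.orderEmbOfFin_apply]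

section Monomials

variable {F V : Type*} [Field F] [AddCommGroup V] [Module F V] {n : ℕ}
  (Q : QuadraticForm F V) (b : Module.Basis (Fin n) F V)

@[simp] theorem eI_empty : eI Q b ∅ = 1 := by
  rw [eI, Finset.sort_empty, List.map_nil, List.prod_nil]

theorem eI_insert_of_lt {i : Fin n} {s : Finset (Fin n)} (h : ∀ j ∈ s, i < j) :
    eI Q b (insert i s) = ι Q (b i) * eI Q b s := by
  rw [eI, Finset.sort_insert _ (fun j hj => (h j hj).le) fun hi => (h i hi).false,
    List.map_cons, List.prod_cons, eI]

theorem eI_singleton (i : Fin n) : eI Q b {i} = ι Q (b i) := by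
  rw [← insert_empty_eq, eI_insert_of_lt Q b (by simp), eI_empty, mul_one]

theorem eI_zero_eq_exteriorAlgebra_basis (s : Finset (Fin n)) :
    eI (0 : QuadraticForm F V) b s = b.ExteriorAlgebra s := by
  rw [ExteriorAlgebra.basis_apply_ofCard b rfl]
  dsimp only [ExteriorAlgebra.ιMulti_family]
  rw [ExteriorAlgebra.ιMulti_apply, eI, ← Finset.ofFn_orderEmbOfFin, List.map_ofFn]
  rfl

theorem contractLeft_eI (d : Module.Dual F V) {s : Finset (Fin n)}
    (hd : ∀ j ∈ s, d (b j) = 0) : contractLeft d (eI Q b s) = 0 := by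
  induction s using Finset.induction_on_min with
  | empty => rw [eI_empty, contractLeft_one]
  | insert i s hi ih =>
    rw [eI_insert_of_lt Q b hi, contractLeft_ι_mul, hd i (Finset.mem_insert_self i s),
      ih fun j hj => hd j (Finset.mem_insert_of_mem hj), zero_smul, mul_zero, sub_zero]

theorem changeForm_eI {Q' : QuadraticForm F V} {B : LinearMap.BilinForm F V}
    (h : B.toQuadraticMap = Q' - Q) (hB : B.IsOrthoᵢ b) (s : Finset (Fin n)) :
    changeForm h (eI Q b s) = eI Q' b s := by
  induction s using Finset.induction_on_min with
  | empty => rw [eI_empty, eI_empty, changeForm_one]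
  | insert i s hi ih =>
    rw [eI_insert_of_lt Q b hi, eI_insert_of_lt Q' b hi, changeForm_ι_mul, ih,
      contractLeft_eI Q' b _ fun j hj => hB (hi j hj).ne, sub_zero]

end Monomials

section Orthogonal

variable {F V : Type*} [Field F] [AddCommGroup V] [Module F V] {n : ℕ}
  {Q : QuadraticForm F V} {b : Module.Basis (Fin n) F V}

theorem isOrthoᵢ_associated_neg [Invertible (2 : F)]
    (horth : (QuadraticMap.polarBilin Q).IsOrthoᵢ b) :
    (QuadraticMap.associated (-Q)).IsOrthoᵢ b := fun i j hij => by
  have := horth hij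
  rw [Function.onFun, QuadraticMap.polarBilin_apply_apply] at this
  rw [Function.onFun, map_neg, LinearMap.neg_apply, LinearMap.neg_apply, neg_eq_zero,
    QuadraticMap.associated_apply, ← QuadraticMap.polar, this, smul_zero]

variable (Q b) in
noncomputable def cliffordBasis [Invertible (2 : F)] :
    Module.Basis (Finset (Fin n)) F (CliffordAlgebra Q) :=
  b.ExteriorAlgebra.map (equivExterior Q).symm

theorem cliffordBasis_apply [Invertible (2 : F)] (horth : (QuadraticMap.polarBilin Q).IsOrthoᵢ b)
    (s : Finset (Fin n)) : cliffordBasis Q b s = eI Q b s := by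
  rw [cliffordBasis, Module.Basis.map_apply, LinearEquiv.symm_apply_eq,
    ← eI_zero_eq_exteriorAlgebra_basis]
  exact (changeForm_eI Q b changeForm.associated_neg_proof (isOrthoᵢ_associated_neg horth) s).symm

theorem ι_mul_ι_anticomm (horth : (QuadraticMap.polarBilin Q).IsOrthoᵢ b) {i j : Fin n}
    (hij : i ≠ j) : ι Q (b i) * ι Q (b j) = -(ι Q (b j) * ι Q (b i)) :=
  eq_neg_of_add_eq_zero_left <| by
    rw [ι_mul_ι_add_swap, ← QuadraticMap.polarBilin_apply_apply, horth hij, map_zero]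

theorem commuteUpToSign_ι_eI (horth : (QuadraticMap.polarBilin Q).IsOrthoᵢ b) (i : Fin n)
    (s : Finset (Fin n)) : CommuteUpToSign (ι Q (b i)) (eI Q b s) := by
  induction s using Finset.induction_on_min with
  | empty => exact eI_empty Q b ▸ (CommuteUpToSign.one_left _).symm
  | insert j s hj ih =>
    rw [eI_insert_of_lt Q b hj]
    refine (CommuteUpToSign.mul_left ?_ ih.symm).symm
    obtain rfl | hij := eq_or_ne j i
    · exact .refl _
    · exact .of_anticomm (ι_mul_ι_anticomm horth hij)

theorem commuteUpToSign_eI_eI (horth : (QuadraticMap.polarBilin Q).IsOrthoᵢ b)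
    (s t : Finset (Fin n)) : CommuteUpToSign (eI Q b s) (eI Q b t) := by
  induction s using Finset.induction_on_min with
  | empty => exact eI_empty Q b ▸ CommuteUpToSign.one_left _
  | insert i s hi ih =>
    rw [eI_insert_of_lt Q b hi]
    exact (commuteUpToSign_ι_eI horth i t).mul_left ih

theorem cconj_eI (horth : (QuadraticMap.polarBilin Q).IsOrthoᵢ b) (s : Finset (Fin n)) :
    ∃ γ : F, cconj Q (eI Q b s) = γ • eI Q b s := by
  induction s using Finset.induction_on_min with
  | empty => exact ⟨1, by simp [cconj]⟩
  | insert i s hi ih =>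
    obtain ⟨γ, hγ⟩ := ih
    obtain ⟨σ, hσ⟩ := (commuteUpToSign_ι_eI horth i s).symm
    refine ⟨-(σ : ℤ) * γ, ?_⟩
    have hmul : cconj Q (ι Q (b i) * eI Q b s) = cconj Q (eI Q b s) * cconj Q (ι Q (b i)) := by
      simp only [cconj, LinearMap.comp_apply, AlgHom.toLinearMap_apply, reverse.map_mul, map_mul]
    have hι : cconj Q (ι Q (b i)) = -ι Q (b i) := by
      simp only [cconj, LinearMap.comp_apply, AlgHom.toLinearMap_apply, reverse_ι, involute_ι]
    rw [eI_insert_of_lt Q b hi, hmul, hγ, hι, smul_mul_assoc, mul_neg, hσ, Units.smul_def,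
      ← Int.cast_smul_eq_zsmul F, smul_neg, smul_smul, ← neg_smul, neg_mul_eq_mul_neg, mul_comm]

theorem ι_mul_eI (horth : (QuadraticMap.polarBilin Q).IsOrthoᵢ b) (i : Fin n)
    (s : Finset (Fin n)) : ∃ c : F, ι Q (b i) * eI Q b s = c • eI Q b ({i} ∆ s) := by
  induction s using Finset.induction_on_min with
  | empty =>
    refine ⟨1, ?_⟩
    rw [eI_empty, mul_one, ← Finset.bot_eq_empty, symmDiff_bot, eI_singleton, one_smul]
  | insert j s hj ih =>
    have hjs : j ∉ s := fun h => (hj j h).false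
    rcases lt_trichotomy i j with hij | rfl | hji
    · have hiu : ∀ k ∈ insert j s, i < k := by
        simpa [hij] using fun k hk => hij.trans (hj k hk)
      refine ⟨1, ?_⟩
      rw [← eI_insert_of_lt Q b hiu, one_smul,
        Finset.insert_eq_singleton_symmDiff fun h => (hiu i h).false]
    · refine ⟨Q (b i), ?_⟩
      rw [eI_insert_of_lt Q b hj, ← mul_assoc, ι_sq_scalar, ← Algebra.smul_def,
        Finset.insert_eq_singleton_symmDiff hjs, symmDiff_symmDiff_cancel_left]
    · obtain ⟨c, h⟩ := ih
      have hj' : ∀ k ∈ {i} ∆ s, j < k := fun k hk => by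
        rcases Finset.mem_union.mp (Finset.symmDiff_subset_union hk) with hk | hk
        · rwa [Finset.mem_singleton.mp hk]
        · exact hj k hk
      refine ⟨-c, ?_⟩
      rw [eI_insert_of_lt Q b hj, ← mul_assoc, ι_mul_ι_anticomm horth hji.ne', neg_mul,
        mul_assoc, h, mul_smul_comm, ← eI_insert_of_lt Q b hj',
        Finset.insert_eq_singleton_symmDiff fun h => (hj' j h).false,
        Finset.insert_eq_singleton_symmDiff hjs, symmDiff_left_comm, neg_smul]

theorem eI_mul_eI (horth : (QuadraticMap.polarBilin Q).IsOrthoᵢ b) (s t : Finset (Fin n)) :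
    ∃ c : F, eI Q b s * eI Q b t = c • eI Q b (s ∆ t) := by
  induction s using Finset.induction_on_min with
  | empty =>
    exact ⟨1, by rw [eI_empty, one_mul, ← Finset.bot_eq_empty, bot_symmDiff, one_smul]⟩
  | insert i s hi ih =>
    obtain ⟨c, hst⟩ := ih
    obtain ⟨d, hist⟩ := ι_mul_eI horth i (s ∆ t)
    refine ⟨c * d, ?_⟩
    rw [eI_insert_of_lt Q b hi, mul_assoc, hst, mul_smul_comm, hist, smul_smul,
      Finset.insert_eq_singleton_symmDiff fun h => (hi i h).false, symmDiff_assoc]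

theorem eI_mul_sub_mul_eI (horth : (QuadraticMap.polarBilin Q).IsOrthoᵢ b)
    (s t : Finset (Fin n)) :
    ∃ c : F, eI Q b s * eI Q b t - eI Q b t * eI Q b s = c • eI Q b (s ∆ t) := by
  obtain ⟨c, hst⟩ := eI_mul_eI horth s t
  obtain ⟨d, hts⟩ := eI_mul_eI horth t s
  exact ⟨c - d, by rw [hst, hts, symmDiff_comm t s, sub_smul]⟩

theorem mem_Gsub_iff {x : CliffordAlgebra Q} : x ∈ Gsub Q ↔ cconj Q x = -x := by
  rw [Gsub, LinearMap.mem_ker, LinearMap.add_apply, LinearMap.id_apply, add_eq_zero_iff_eq_neg]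

theorem Gsub_le_span_cliffordBasis [Invertible (2 : F)]
    (horth : (QuadraticMap.polarBilin Q).IsOrthoᵢ b) :
    Gsub Q ≤ Submodule.span F (cliffordBasis Q b '' {s | cliffordBasis Q b s ∈ Gsub Q}) := by
  choose γ hγ using cconj_eI horth
  have hG : Gsub Q = Module.End.eigenspace (cconj Q) (-1) := by
    ext x
    rw [mem_Gsub_iff, Module.End.mem_eigenspace_iff, neg_one_smul]
  rw [hG]
  refine ((cliffordBasis Q b).eigenspace_le_span_image (γ := γ) (fun s => ?_) (-1)).trans
    (Submodule.span_mono (Set.image_mono fun s hs => ?_))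
  · rw [cliffordBasis_apply horth, hγ]
  · rw [Set.mem_ofPred_eq, cliffordBasis_apply horth, Module.End.mem_eigenspace_iff, hγ, hs]

end Orthogonal

theorem isOrthoᵢ_polarBilin_of_eq_neg {F V : Type*} [Field F] [AddCommGroup V] [Module F V]
    {ι : Type*} {B : LinearMap.BilinForm F V} {Q : QuadraticForm F V} (hQ : ∀ v, Q v = -(B v v))
    {b : ι → V} (hB : B.IsOrthoᵢ b) : (QuadraticMap.polarBilin Q).IsOrthoᵢ b :=
  fun i j hij => by
    rw [Function.onFun, QuadraticMap.polarBilin_apply_apply]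
    simp only [QuadraticMap.polar, hQ, map_add, LinearMap.add_apply, hB hij, hB hij.symm]
    ring

theorem stmt18_general {F V : Type*} [Field F] [AddCommGroup V] [Module F V]
    (h2 : (2 : F) ≠ 0)
    (B : LinearMap.BilinForm F V)
    (Qf : QuadraticForm F V) (hQ : ∀ v : V, Qf v = -(B v v))
    {n : ℕ} (b : Module.Basis (Fin n) F V)
    (hortho : ∀ i j : Fin n, i ≠ j → B (b i) (b j) = 0)
    (ad : CliffordAlgebra Qf → (Gsub Qf →ₗ[F] Gsub Qf))
    (had : ∀ (ξ : CliffordAlgebra Qf) (x : Gsub Qf),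
      ((ad ξ x : CliffordAlgebra Qf)) = ξ * (x : CliffordAlgebra Qf) - (x : CliffordAlgebra Qf) * ξ)
    (s t : Finset (Fin n)) :
    (s ≠ t → LinearMap.trace F (Gsub Qf) (ad (eI Qf b s) ∘ₗ ad (eI Qf b t)) = 0) ∧
    (∀ (u : Finset (Fin n)) (ζ : Gsub Qf), (ζ : CliffordAlgebra Qf) = eI Qf b u →
      ((ad (eI Qf b s) (ad (eI Qf b s) ζ) : CliffordAlgebra Qf) = 0 ∨
       (ad (eI Qf b s) (ad (eI Qf b s) ζ) : CliffordAlgebra Qf)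
         = (4 : F) • (eI Qf b s * eI Qf b s * eI Qf b u))) ∧
    algebraMap F (CliffordAlgebra Qf)
        (LinearMap.trace F (Gsub Qf) (ad (eI Qf b s) ∘ₗ ad (eI Qf b s)))
      = (4 * ((Set.ncard {u : Finset (Fin n) | ∃ ζ : Gsub Qf,
            (ζ : CliffordAlgebra Qf) = eI Qf b u ∧
            (ad (eI Qf b s) (ad (eI Qf b s) ζ) : CliffordAlgebra Qf) ≠ 0} : ℕ) : F))
          • (eI Qf b s * eI Qf b s) := by
  have : Invertible (2 : F) := invertibleOfNonzero h2
  have horth := isOrthoᵢ_polarBilin_of_eq_neg hQ hortho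
  have hv := cliffordBasis_apply horth
  have hG := Gsub_le_span_cliffordBasis horth
  have had_sq : ∀ (u : Finset (Fin n)) (ζ : Gsub Qf), (ζ : CliffordAlgebra Qf) = eI Qf b u →
      ((ad (eI Qf b s) (ad (eI Qf b s) ζ) : CliffordAlgebra Qf) = 0 ∨
       (ad (eI Qf b s) (ad (eI Qf b s) ζ) : CliffordAlgebra Qf)
         = (4 : F) • (eI Qf b s * eI Qf b s * eI Qf b u)) := fun u ζ hζ => by
    rw [had, had, hζ]
    exact (commuteUpToSign_eI_eI horth s u).commutator_commutator
  refine ⟨fun hst => ?_, had_sq, ?_⟩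
  · refine (cliffordBasis Qf b).trace_eq_zero_of_apply_eq_smul_ne hG _ fun u ζ hζ => ?_
    obtain ⟨c, hc⟩ := eI_mul_sub_mul_eI horth t u
    obtain ⟨d, hd⟩ := eI_mul_sub_mul_eI horth s (t ∆ u)
    refine ⟨s ∆ (t ∆ u), ?_, c * d, ?_⟩
    · rwa [← symmDiff_assoc, Ne, symmDiff_eq_right, symmDiff_eq_bot]
    · rw [LinearMap.comp_apply, had, had, hζ, hv, hc, mul_smul_comm, smul_mul_assoc, ← smul_sub,
        hd, smul_smul, hv]
  · obtain ⟨c, hc⟩ := eI_mul_eI horth s s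
    rw [symmDiff_self, Finset.bot_eq_empty, eI_empty] at hc
    rw [(cliffordBasis Qf b).trace_eq_ncard_mul hG _ (4 * c) fun u ζ hζ => ?_]
    · simp only [hv, LinearMap.comp_apply]
      rw [hc, Algebra.algebraMap_eq_smul_one, smul_smul]
      congr 1
      ring
    · rw [hv] at hζ ⊢
      rw [mul_smul]
      simpa [hc] using had_sq u ζ hζ

theorem stmt18 {F V : Type*} [Field F] [AddCommGroup V] [Module F V]
    [FiniteDimensional F V] (h2 : (2 : F) ≠ 0)
    (B : LinearMap.BilinForm F V)
    (hsymm : ∀ v w : V, B v w = B w v)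
    (hnd : ∀ v : V, (∀ w : V, B v w = 0) → v = 0)
    (Qf : QuadraticForm F V) (hQ : ∀ v : V, Qf v = -(B v v))
    {n : ℕ} (b : Module.Basis (Fin n) F V)
    (hortho : ∀ i j : Fin n, i ≠ j → B (b i) (b j) = 0)
    (ad : CliffordAlgebra Qf → (Gsub Qf →ₗ[F] Gsub Qf))
    (had : ∀ (ξ : CliffordAlgebra Qf) (x : Gsub Qf),
      ((ad ξ x : CliffordAlgebra Qf)) = ξ * (x : CliffordAlgebra Qf) - (x : CliffordAlgebra Qf) * ξ)
    (s t : Finset (Fin n))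
    (hs : cconj Qf (eI Qf b s) = -(eI Qf b s))
    (ht : cconj Qf (eI Qf b t) = -(eI Qf b t)) :
    (s ≠ t → LinearMap.trace F (Gsub Qf) (ad (eI Qf b s) ∘ₗ ad (eI Qf b t)) = 0) ∧
    (∀ (u : Finset (Fin n)) (ζ : Gsub Qf), (ζ : CliffordAlgebra Qf) = eI Qf b u →
      ((ad (eI Qf b s) (ad (eI Qf b s) ζ) : CliffordAlgebra Qf) = 0 ∨
       (ad (eI Qf b s) (ad (eI Qf b s) ζ) : CliffordAlgebra Qf)
         = (4 : F) • (eI Qf b s * eI Qf b s * eI Qf b u))) ∧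
    algebraMap F (CliffordAlgebra Qf)
        (LinearMap.trace F (Gsub Qf) (ad (eI Qf b s) ∘ₗ ad (eI Qf b s)))
      = (4 * ((Set.ncard {u : Finset (Fin n) | ∃ ζ : Gsub Qf,
            (ζ : CliffordAlgebra Qf) = eI Qf b u ∧
            (ad (eI Qf b s) (ad (eI Qf b s) ζ) : CliffordAlgebra Qf) ≠ 0} : ℕ) : F))
          • (eI Qf b s * eI Qf b s) :=
  stmt18_general h2 B Qf hQ b hortho ad had s t
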